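/- Let H be a Hopf algebra over a field k with comultiplication Δ, counit ε and antipode S, and let g, h ∈ H be grouplike elements. Then the map φ ↦ φ ↼ h restricts to a k-linear equivalence (bijective linear map) from L_g onto L_{S(h)g}, with inverse given by ψ ↦ ψ ↼ S(h). In particular, taking h = g, the map φ ↦ φ ↼ g is a k-linear equivalence from L_g onto L_1, so L_g and L_1 have the same dimension whenever H is finite-dimensional. -/
import Mathlib


open scoped TensorProduct

/-- An element `g` of a Hopf algebra is grouplike if `Δ(g) = g ⊗ g` and `ε(g) = 1`. -/
def IsGrouplike (k H : Type) [Field k] [Ring H] [HopfAlgebra k H] (g : H) : Prop :=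
  Coalgebra.comul (R := k) g = g ⊗ₜ[k] g ∧ Coalgebra.counit (R := k) g = 1

/-- The map `H ⊗ H → H`, `x ⊗ y ↦ φ(y) • x`, i.e. `(id ⊗ φ)` followed by `H ⊗ k ≅ H`. -/
noncomputable def idTens (k H : Type) [Field k] [Ring H] [Algebra k H]
    (φ : H →ₗ[k] k) : H ⊗[k] H →ₗ[k] H :=
  (TensorProduct.rid k H).toLinearMap ∘ₗ (LinearMap.lTensor H φ)

/-- The space `L_g` of left `g`-cointegrals on a Hopf algebra:
all `φ ∈ H*` with `(id ⊗ φ)(Δ(a)) = φ(a) • g` for all `a`. -/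
noncomputable def leftCointegrals (k H : Type) [Field k] [Ring H] [HopfAlgebra k H]
    (g : H) : Submodule k (H →ₗ[k] k) where
  carrier := {φ | ∀ a : H, idTens k H φ (Coalgebra.comul (R := k) a) = φ a • g}
  add_mem' := by
    intro φ ψ hφ hψ a
    simp only [idTens, LinearMap.comp_apply] at *
    rw [LinearMap.lTensor_add, LinearMap.add_apply, map_add, hφ a, hψ a,
      LinearMap.add_apply, add_smul]
  zero_mem' := by
    intro a
    simp [idTens]
  smul_mem' := by
    intro c φ hφ a
    simp only [idTens, LinearMap.comp_apply] at *
    rw [LinearMap.lTensor_smul, LinearMap.smul_apply, map_smul, hφ a,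
      LinearMap.smul_apply, smul_assoc]

section Aux
variable (k H : Type) [Field k] [Ring H] [HopfAlgebra k H]

lemma idTens_key (x : H) (φ : H →ₗ[k] k) (t : H ⊗[k] H) :
    x * idTens k H (φ ∘ₗ LinearMap.mulLeft k x) t = idTens k H φ ((x ⊗ₜ[k] x) * t) := by
  induction t using TensorProduct.induction_on with
  | zero => simp
  | tmul a b =>
      simp [idTens, Algebra.TensorProduct.tmul_mul_tmul, mul_smul_comm]
  | add s t hs ht =>
      rw [map_add, mul_add, hs, ht, mul_add, map_add]

lemma comul_mul' (x a : H) :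
    Coalgebra.comul (R := k) (x * a)
      = Coalgebra.comul (R := k) x * Coalgebra.comul (R := k) a := by
  simpa using map_mul (Bialgebra.comulAlgHom k H) x a

lemma antipode_grouplike (h : H) (hh : Coalgebra.comul (R := k) h = h ⊗ₜ[k] h)
    (h1 : HopfAlgebra.antipode (R := k) h * h = 1)
    (h2 : h * HopfAlgebra.antipode (R := k) h = 1) :
    Coalgebra.comul (R := k) (HopfAlgebra.antipode (R := k) h)
      = HopfAlgebra.antipode (R := k) h ⊗ₜ[k] HopfAlgebra.antipode (R := k) h := by
  set S := HopfAlgebra.antipode (R := k) h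
  have e1 : Coalgebra.comul (R := k) h * Coalgebra.comul (R := k) S = 1 := by
    rw [← comul_mul', h2]; simpa using map_one (Bialgebra.comulAlgHom k H)
  have e2 : (S ⊗ₜ[k] S) * (h ⊗ₜ[k] h) = 1 := by
    rw [Algebra.TensorProduct.tmul_mul_tmul, h1]; rfl
  calc Coalgebra.comul (R := k) S
      = 1 * Coalgebra.comul (R := k) S := (one_mul _).symm
    _ = ((S ⊗ₜ[k] S) * (h ⊗ₜ[k] h)) * Coalgebra.comul (R := k) S := by rw [e2]
    _ = (S ⊗ₜ[k] S) * (Coalgebra.comul (R := k) h * Coalgebra.comul (R := k) S) := by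
        rw [hh, mul_assoc]
    _ = S ⊗ₜ[k] S := by rw [e1, mul_one]

lemma mem_shift (x y c : H) (hyx : y * x = 1)
    (hΔx : Coalgebra.comul (R := k) x = x ⊗ₜ[k] x)
    (φ : H →ₗ[k] k) (hφ : φ ∈ leftCointegrals k H c) :
    φ ∘ₗ LinearMap.mulLeft k x ∈ leftCointegrals k H (y * c) := by
  have hφ' : ∀ a : H, idTens k H φ (Coalgebra.comul (R := k) a) = φ a • c := hφ
  intro a
  have key := idTens_key k H x φ (Coalgebra.comul (R := k) a)
  rw [← hΔx, ← comul_mul', hφ' (x * a)] at key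
  have main : idTens k H (φ ∘ₗ LinearMap.mulLeft k x) (Coalgebra.comul (R := k) a)
      = φ (x * a) • (y * c) := by
    calc idTens k H (φ ∘ₗ LinearMap.mulLeft k x) (Coalgebra.comul (R := k) a)
        = y * (x * idTens k H (φ ∘ₗ LinearMap.mulLeft k x) (Coalgebra.comul (R := k) a)) := by
          rw [← mul_assoc, hyx, one_mul]
      _ = y * (φ (x * a) • c) := by rw [key]
      _ = φ (x * a) • (y * c) := mul_smul_comm _ _ _
  simpa using main

end Aux

theorem stmt5 (k H : Type) [Field k] [Ring H] [HopfAlgebra k H]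
    (g h : H) (hg : IsGrouplike k H g) (hh : IsGrouplike k H h) :
    (∀ φ ∈ leftCointegrals k H g,
        (φ ∘ₗ LinearMap.mulLeft k h) ∈
          leftCointegrals k H (HopfAlgebra.antipode (R := k) h * g)) ∧
    (∀ ψ ∈ leftCointegrals k H (HopfAlgebra.antipode (R := k) h * g),
        (ψ ∘ₗ LinearMap.mulLeft k (HopfAlgebra.antipode (R := k) h)) ∈
          leftCointegrals k H g) ∧
    (∀ φ ∈ leftCointegrals k H g,
        (φ ∘ₗ LinearMap.mulLeft k h) ∘ₗ
            LinearMap.mulLeft k (HopfAlgebra.antipode (R := k) h) = φ) ∧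
    (∀ ψ ∈ leftCointegrals k H (HopfAlgebra.antipode (R := k) h * g),
        (ψ ∘ₗ LinearMap.mulLeft k (HopfAlgebra.antipode (R := k) h)) ∘ₗ
            LinearMap.mulLeft k h = ψ) ∧
    (Module.Finite k H →
      Module.finrank k (leftCointegrals k H g) =
        Module.finrank k (leftCointegrals k H (1 : H))) := by
  obtain ⟨hgc, hge⟩ := hg
  obtain ⟨hhc, hhe⟩ := hh
  have hSh : HopfAlgebra.antipode (R := k) h * h = 1 := by
    have := HopfAlgebra.mul_antipode_rTensor_comul_apply (R := k) (A := H) h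
    rw [hhc, hhe] at this; simpa using this
  have hhS : h * HopfAlgebra.antipode (R := k) h = 1 := by
    have := HopfAlgebra.mul_antipode_lTensor_comul_apply (R := k) (A := H) h
    rw [hhc, hhe] at this; simpa using this
  have hSg : HopfAlgebra.antipode (R := k) g * g = 1 := by
    have := HopfAlgebra.mul_antipode_rTensor_comul_apply (R := k) (A := H) g
    rw [hgc, hge] at this; simpa using this
  have hgS : g * HopfAlgebra.antipode (R := k) g = 1 := by
    have := HopfAlgebra.mul_antipode_lTensor_comul_apply (R := k) (A := H) g
    rw [hgc, hge] at this; simpa using this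
  have hShc := antipode_grouplike k H h hhc hSh hhS
  have hSgc := antipode_grouplike k H g hgc hSg hgS
  refine ⟨?_, ?_, ?_, ?_, ?_⟩
  · intro φ hφ
    exact mem_shift k H h (HopfAlgebra.antipode (R := k) h) g hSh hhc φ hφ
  · intro ψ hψ
    have := mem_shift k H (HopfAlgebra.antipode (R := k) h) h
      (HopfAlgebra.antipode (R := k) h * g) hhS hShc ψ hψ
    rwa [← mul_assoc, hhS, one_mul] at this
  · intro φ _
    ext a
    simp [← mul_assoc, hhS]
  · intro ψ _
    ext a
    simp [← mul_assoc, hSh]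
  · intro _
    have fwd : ∀ φ ∈ leftCointegrals k H g,
        (φ ∘ₗ LinearMap.mulLeft k g) ∈ leftCointegrals k H (1 : H) := by
      intro φ hφ
      have := mem_shift k H g (HopfAlgebra.antipode (R := k) g) g hSg hgc φ hφ
      rwa [hSg] at this
    have bwd : ∀ ψ ∈ leftCointegrals k H (1 : H),
        (ψ ∘ₗ LinearMap.mulLeft k (HopfAlgebra.antipode (R := k) g)) ∈
          leftCointegrals k H g := by
      intro ψ hψ
      have := mem_shift k H (HopfAlgebra.antipode (R := k) g) g (1 : H) hgS hSgc ψ hψ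
      rwa [mul_one] at this
    let e : (leftCointegrals k H g) ≃ₗ[k] (leftCointegrals k H (1 : H)) :=
      { toFun := fun φ => ⟨φ.1 ∘ₗ LinearMap.mulLeft k g, fwd φ.1 φ.2⟩
        map_add' := fun φ ψ => by ext a; simp
        map_smul' := fun c φ => by ext a; simp
        invFun := fun ψ => ⟨ψ.1 ∘ₗ LinearMap.mulLeft k (HopfAlgebra.antipode (R := k) g),
          bwd ψ.1 ψ.2⟩
        left_inv := fun φ => by
          apply Subtype.ext
          ext a
          simp [← mul_assoc, hgS]
        right_inv := fun ψ => by
          apply Subtype.ext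
          ext a
          simp [← mul_assoc, hSg] }
    exact LinearEquiv.finrank_eq e
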